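/- Let ω > 0 and define for t ∈ ℝ the operators J(t) = ω sin(ωt)(cos(ωt)x + sin(ωt)x̆) − i cos(ωt)(cos(ωt)∇ + sin(ωt)∇̆) and H(t) = ω cos(ωt)(cos(ωt)x + sin(ωt)x̆) + i sin(ωt)(cos(ωt)∇ + sin(ωt)∇̆), where x̆ = (−x₂, x₁, (cot ωt − csc ωt)x₃) and ∇̆ = (−∂_{x₂}, ∂_{x₁}, (cot ωt − csc ωt)∂_{x₃}). Then the commutator of the j-th component of J(t) with the operator L = i∂_t + (1/2)Δ − (ω²/2)|x|² + ωL_z vanishes for j = 1,2, and for j = 3 equals 2iω sin(ωt)(ω sin(ωt)x₃ − i cos(ωt)∂_{x₃}) applied as a multiplication/differentiation operator. -/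

import Mathlib

open Real Complex

noncomputable def Dt (u : ℝ → ℝ → ℝ → ℝ → ℂ) : ℝ → ℝ → ℝ → ℝ → ℂ :=
  fun t a b c => deriv (fun s => u s a b c) t

noncomputable def D1 (u : ℝ → ℝ → ℝ → ℝ → ℂ) : ℝ → ℝ → ℝ → ℝ → ℂ :=
  fun t a b c => deriv (fun s => u t s b c) a

noncomputable def D2 (u : ℝ → ℝ → ℝ → ℝ → ℂ) : ℝ → ℝ → ℝ → ℝ → ℂ :=
  fun t a b c => deriv (fun s => u t a s c) b

noncomputable def D3 (u : ℝ → ℝ → ℝ → ℝ → ℂ) : ℝ → ℝ → ℝ → ℝ → ℂ :=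
  fun t a b c => deriv (fun s => u t a b s) c

noncomputable def U4 (u : ℝ → ℝ → ℝ → ℝ → ℂ) : ℝ × ℝ × ℝ × ℝ → ℂ :=
  fun p => u p.1 p.2.1 p.2.2.1 p.2.2.2

def Sm (u : ℝ → ℝ → ℝ → ℝ → ℂ) : Prop := ContDiff ℝ (⊤ : ℕ∞) (U4 u)

noncomputable def Dv (v : ℝ × ℝ × ℝ × ℝ) (u : ℝ → ℝ → ℝ → ℝ → ℂ) : ℝ → ℝ → ℝ → ℝ → ℂ :=
  fun t a b c => fderiv ℝ (U4 u) (t, a, b, c) v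

lemma hasDerivAt_slice_t {u : ℝ → ℝ → ℝ → ℝ → ℂ} (hu : Differentiable ℝ (U4 u))
    (t a b c : ℝ) :
    HasDerivAt (fun s => u s a b c) (fderiv ℝ (U4 u) (t, a, b, c) (1, 0, 0, 0)) t := by
  have h1 : HasDerivAt (fun s : ℝ => (s, a, b, c) : ℝ → ℝ × ℝ × ℝ × ℝ)
      ((1 : ℝ), (0 : ℝ), (0 : ℝ), (0 : ℝ)) t :=
    HasDerivAt.prodMk (hasDerivAt_id t) (HasDerivAt.prodMk (hasDerivAt_const t a)
      (HasDerivAt.prodMk (hasDerivAt_const t b) (hasDerivAt_const t c)))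
  exact ((hu (t, a, b, c)).hasFDerivAt.comp_hasDerivAt t h1)

lemma hasDerivAt_slice_1 {u : ℝ → ℝ → ℝ → ℝ → ℂ} (hu : Differentiable ℝ (U4 u))
    (t a b c : ℝ) :
    HasDerivAt (fun s => u t s b c) (fderiv ℝ (U4 u) (t, a, b, c) (0, 1, 0, 0)) a := by
  have h1 : HasDerivAt (fun s : ℝ => (t, s, b, c) : ℝ → ℝ × ℝ × ℝ × ℝ)
      ((0 : ℝ), (1 : ℝ), (0 : ℝ), (0 : ℝ)) a :=
    HasDerivAt.prodMk (hasDerivAt_const a t) (HasDerivAt.prodMk (hasDerivAt_id a)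
      (HasDerivAt.prodMk (hasDerivAt_const a b) (hasDerivAt_const a c)))
  exact ((hu (t, a, b, c)).hasFDerivAt.comp_hasDerivAt a h1)

lemma hasDerivAt_slice_2 {u : ℝ → ℝ → ℝ → ℝ → ℂ} (hu : Differentiable ℝ (U4 u))
    (t a b c : ℝ) :
    HasDerivAt (fun s => u t a s c) (fderiv ℝ (U4 u) (t, a, b, c) (0, 0, 1, 0)) b := by
  have h1 : HasDerivAt (fun s : ℝ => (t, a, s, c) : ℝ → ℝ × ℝ × ℝ × ℝ)
      ((0 : ℝ), (0 : ℝ), (1 : ℝ), (0 : ℝ)) b :=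
    HasDerivAt.prodMk (hasDerivAt_const b t) (HasDerivAt.prodMk (hasDerivAt_const b a)
      (HasDerivAt.prodMk (hasDerivAt_id b) (hasDerivAt_const b c)))
  exact ((hu (t, a, b, c)).hasFDerivAt.comp_hasDerivAt b h1)

lemma hasDerivAt_slice_3 {u : ℝ → ℝ → ℝ → ℝ → ℂ} (hu : Differentiable ℝ (U4 u))
    (t a b c : ℝ) :
    HasDerivAt (fun s => u t a b s) (fderiv ℝ (U4 u) (t, a, b, c) (0, 0, 0, 1)) c := by
  have h1 : HasDerivAt (fun s : ℝ => (t, a, b, s) : ℝ → ℝ × ℝ × ℝ × ℝ)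
      ((0 : ℝ), (0 : ℝ), (0 : ℝ), (1 : ℝ)) c :=
    HasDerivAt.prodMk (hasDerivAt_const c t) (HasDerivAt.prodMk (hasDerivAt_const c a)
      (HasDerivAt.prodMk (hasDerivAt_const c b) (hasDerivAt_id c)))
  exact ((hu (t, a, b, c)).hasFDerivAt.comp_hasDerivAt c h1)

lemma Sm.diff {u : ℝ → ℝ → ℝ → ℝ → ℂ} (hu : Sm u) : Differentiable ℝ (U4 u) :=
  hu.differentiable (by simp)

lemma Dt_eq {u : ℝ → ℝ → ℝ → ℝ → ℂ} (hu : Sm u) : Dt u = Dv (1, 0, 0, 0) u := by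
  funext t a b c
  exact (hasDerivAt_slice_t hu.diff t a b c).deriv

lemma D1_eq {u : ℝ → ℝ → ℝ → ℝ → ℂ} (hu : Sm u) : D1 u = Dv (0, 1, 0, 0) u := by
  funext t a b c
  exact (hasDerivAt_slice_1 hu.diff t a b c).deriv

lemma D2_eq {u : ℝ → ℝ → ℝ → ℝ → ℂ} (hu : Sm u) : D2 u = Dv (0, 0, 1, 0) u := by
  funext t a b c
  exact (hasDerivAt_slice_2 hu.diff t a b c).deriv

lemma D3_eq {u : ℝ → ℝ → ℝ → ℝ → ℂ} (hu : Sm u) : D3 u = Dv (0, 0, 0, 1) u := by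
  funext t a b c
  exact (hasDerivAt_slice_3 hu.diff t a b c).deriv

lemma U4_Dv (v : ℝ × ℝ × ℝ × ℝ) (u : ℝ → ℝ → ℝ → ℝ → ℂ) :
    U4 (Dv v u) = fun p => fderiv ℝ (U4 u) p v := rfl

lemma Sm.dv {u : ℝ → ℝ → ℝ → ℝ → ℂ} (hu : Sm u) (v : ℝ × ℝ × ℝ × ℝ) : Sm (Dv v u) := by
  rw [Sm, U4_Dv]
  exact (hu.fderiv_right (by simp)).clm_apply contDiff_const

lemma Dv_swap {u : ℝ → ℝ → ℝ → ℝ → ℂ} (hu : Sm u) (v w : ℝ × ℝ × ℝ × ℝ) :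
    Dv v (Dv w u) = Dv w (Dv v u) := by
  have hd : Differentiable ℝ (fderiv ℝ (U4 u)) :=
    (hu.fderiv_right (m := 1) ((by exact WithTop.coe_le_coe.mpr le_top))).differentiable one_ne_zero
  funext t a b c
  show fderiv ℝ (U4 (Dv w u)) (t,a,b,c) v = fderiv ℝ (U4 (Dv v u)) (t,a,b,c) w
  rw [U4_Dv, U4_Dv]
  have key : ∀ z y : ℝ × ℝ × ℝ × ℝ,
      fderiv ℝ (fun p => fderiv ℝ (U4 u) p z) (t,a,b,c) y
        = fderiv ℝ (fderiv ℝ (U4 u)) (t,a,b,c) y z := by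
    intro z y
    rw [fderiv_clm_apply (hd _) (differentiableAt_const z)]
    simp
  rw [key, key]
  exact second_derivative_symmetric (f := U4 u)
    (fun y => (hu.diff y).hasFDerivAt) (hd _).hasFDerivAt _ _

lemma Sm.dt {u : ℝ → ℝ → ℝ → ℝ → ℂ} (hu : Sm u) : Sm (Dt u) := by
  rw [Dt_eq hu]; exact hu.dv _
lemma Sm.d1 {u : ℝ → ℝ → ℝ → ℝ → ℂ} (hu : Sm u) : Sm (D1 u) := by
  rw [D1_eq hu]; exact hu.dv _
lemma Sm.d2 {u : ℝ → ℝ → ℝ → ℝ → ℂ} (hu : Sm u) : Sm (D2 u) := by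
  rw [D2_eq hu]; exact hu.dv _
lemma Sm.d3 {u : ℝ → ℝ → ℝ → ℝ → ℂ} (hu : Sm u) : Sm (D3 u) := by
  rw [D3_eq hu]; exact hu.dv _

lemma swap_t1 {u : ℝ → ℝ → ℝ → ℝ → ℂ} (hu : Sm u) : Dt (D1 u) = D1 (Dt u) := by
  rw [D1_eq hu, Dt_eq (hu.dv _), Dv_swap hu, Dt_eq hu, D1_eq (hu.dv _)]
lemma swap_t2 {u : ℝ → ℝ → ℝ → ℝ → ℂ} (hu : Sm u) : Dt (D2 u) = D2 (Dt u) := by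
  rw [D2_eq hu, Dt_eq (hu.dv _), Dv_swap hu, Dt_eq hu, D2_eq (hu.dv _)]
lemma swap_t3 {u : ℝ → ℝ → ℝ → ℝ → ℂ} (hu : Sm u) : Dt (D3 u) = D3 (Dt u) := by
  rw [D3_eq hu, Dt_eq (hu.dv _), Dv_swap hu, Dt_eq hu, D3_eq (hu.dv _)]
lemma swap_21 {u : ℝ → ℝ → ℝ → ℝ → ℂ} (hu : Sm u) : D2 (D1 u) = D1 (D2 u) := by
  rw [D1_eq hu, D2_eq (hu.dv _), Dv_swap hu, D2_eq hu, D1_eq (hu.dv _)]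
lemma swap_31 {u : ℝ → ℝ → ℝ → ℝ → ℂ} (hu : Sm u) : D3 (D1 u) = D1 (D3 u) := by
  rw [D1_eq hu, D3_eq (hu.dv _), Dv_swap hu, D3_eq hu, D1_eq (hu.dv _)]
lemma swap_32 {u : ℝ → ℝ → ℝ → ℝ → ℂ} (hu : Sm u) : D3 (D2 u) = D2 (D3 u) := by
  rw [D2_eq hu, D3_eq (hu.dv _), Dv_swap hu, D3_eq hu, D2_eq (hu.dv _)]

-- Sm closure lemmas
lemma Sm.add {f g : ℝ → ℝ → ℝ → ℝ → ℂ} (hf : Sm f) (hg : Sm g) :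
    Sm (fun t a b c => f t a b c + g t a b c) := ContDiff.add hf hg
lemma Sm.sub {f g : ℝ → ℝ → ℝ → ℝ → ℂ} (hf : Sm f) (hg : Sm g) :
    Sm (fun t a b c => f t a b c - g t a b c) := ContDiff.sub hf hg
lemma Sm.mul {f g : ℝ → ℝ → ℝ → ℝ → ℂ} (hf : Sm f) (hg : Sm g) :
    Sm (fun t a b c => f t a b c * g t a b c) := ContDiff.mul hf hg
lemma Sm.neg {f : ℝ → ℝ → ℝ → ℝ → ℂ} (hf : Sm f) :
    Sm (fun t a b c => -f t a b c) := ContDiff.neg hf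
lemma Sm.const (z : ℂ) : Sm (fun _ _ _ _ => z) := contDiff_const
lemma Sm.sinω (ω : ℝ) : Sm (fun t _ _ _ => ((Real.sin (ω * t) : ℝ) : ℂ)) :=
  Complex.ofRealCLM.contDiff.comp
    (Real.contDiff_sin.comp (contDiff_const.mul contDiff_fst))
lemma Sm.cosω (ω : ℝ) : Sm (fun t _ _ _ => ((Real.cos (ω * t) : ℝ) : ℂ)) :=
  Complex.ofRealCLM.contDiff.comp
    (Real.contDiff_cos.comp (contDiff_const.mul contDiff_fst))
lemma Sm.xa : Sm (fun _ a _ _ => ((a : ℝ) : ℂ)) :=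
  Complex.ofRealCLM.contDiff.comp (contDiff_fst.comp contDiff_snd)
lemma Sm.xb : Sm (fun _ _ b _ => ((b : ℝ) : ℂ)) :=
  Complex.ofRealCLM.contDiff.comp (contDiff_fst.comp (contDiff_snd.comp contDiff_snd))
lemma Sm.xc : Sm (fun _ _ _ c => ((c : ℝ) : ℂ)) :=
  Complex.ofRealCLM.contDiff.comp
    (contDiff_snd.comp (contDiff_snd.comp contDiff_snd))

-- differentiability of slices
lemma sdt {u : ℝ → ℝ → ℝ → ℝ → ℂ} (hu : Sm u) (t a b c : ℝ) :
    DifferentiableAt ℝ (fun s => u s a b c) t :=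
  (hasDerivAt_slice_t hu.diff t a b c).differentiableAt
lemma sd1 {u : ℝ → ℝ → ℝ → ℝ → ℂ} (hu : Sm u) (t a b c : ℝ) :
    DifferentiableAt ℝ (fun s => u t s b c) a :=
  (hasDerivAt_slice_1 hu.diff t a b c).differentiableAt
lemma sd2 {u : ℝ → ℝ → ℝ → ℝ → ℂ} (hu : Sm u) (t a b c : ℝ) :
    DifferentiableAt ℝ (fun s => u t a s c) b :=
  (hasDerivAt_slice_2 hu.diff t a b c).differentiableAt
lemma sd3 {u : ℝ → ℝ → ℝ → ℝ → ℂ} (hu : Sm u) (t a b c : ℝ) :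
    DifferentiableAt ℝ (fun s => u t a b s) c :=
  (hasDerivAt_slice_3 hu.diff t a b c).differentiableAt

-- structural derivative rules
lemma Dt_add {f g : ℝ → ℝ → ℝ → ℝ → ℂ} (hf : Sm f) (hg : Sm g) :
    Dt (fun t a b c => f t a b c + g t a b c)
      = fun t a b c => Dt f t a b c + Dt g t a b c := by
  funext t a b c; exact deriv_add (sdt hf t a b c) (sdt hg t a b c)
lemma D1_add {f g : ℝ → ℝ → ℝ → ℝ → ℂ} (hf : Sm f) (hg : Sm g) :
    D1 (fun t a b c => f t a b c + g t a b c)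
      = fun t a b c => D1 f t a b c + D1 g t a b c := by
  funext t a b c; exact deriv_add (sd1 hf t a b c) (sd1 hg t a b c)
lemma D2_add {f g : ℝ → ℝ → ℝ → ℝ → ℂ} (hf : Sm f) (hg : Sm g) :
    D2 (fun t a b c => f t a b c + g t a b c)
      = fun t a b c => D2 f t a b c + D2 g t a b c := by
  funext t a b c; exact deriv_add (sd2 hf t a b c) (sd2 hg t a b c)
lemma D3_add {f g : ℝ → ℝ → ℝ → ℝ → ℂ} (hf : Sm f) (hg : Sm g) :
    D3 (fun t a b c => f t a b c + g t a b c)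
      = fun t a b c => D3 f t a b c + D3 g t a b c := by
  funext t a b c; exact deriv_add (sd3 hf t a b c) (sd3 hg t a b c)

lemma Dt_sub {f g : ℝ → ℝ → ℝ → ℝ → ℂ} (hf : Sm f) (hg : Sm g) :
    Dt (fun t a b c => f t a b c - g t a b c)
      = fun t a b c => Dt f t a b c - Dt g t a b c := by
  funext t a b c; exact deriv_sub (sdt hf t a b c) (sdt hg t a b c)
lemma D1_sub {f g : ℝ → ℝ → ℝ → ℝ → ℂ} (hf : Sm f) (hg : Sm g) :
    D1 (fun t a b c => f t a b c - g t a b c)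
      = fun t a b c => D1 f t a b c - D1 g t a b c := by
  funext t a b c; exact deriv_sub (sd1 hf t a b c) (sd1 hg t a b c)
lemma D2_sub {f g : ℝ → ℝ → ℝ → ℝ → ℂ} (hf : Sm f) (hg : Sm g) :
    D2 (fun t a b c => f t a b c - g t a b c)
      = fun t a b c => D2 f t a b c - D2 g t a b c := by
  funext t a b c; exact deriv_sub (sd2 hf t a b c) (sd2 hg t a b c)
lemma D3_sub {f g : ℝ → ℝ → ℝ → ℝ → ℂ} (hf : Sm f) (hg : Sm g) :
    D3 (fun t a b c => f t a b c - g t a b c)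
      = fun t a b c => D3 f t a b c - D3 g t a b c := by
  funext t a b c; exact deriv_sub (sd3 hf t a b c) (sd3 hg t a b c)

lemma Dt_mul {f g : ℝ → ℝ → ℝ → ℝ → ℂ} (hf : Sm f) (hg : Sm g) :
    Dt (fun t a b c => f t a b c * g t a b c)
      = fun t a b c => Dt f t a b c * g t a b c + f t a b c * Dt g t a b c := by
  funext t a b c; exact deriv_mul (sdt hf t a b c) (sdt hg t a b c)
lemma D1_mul {f g : ℝ → ℝ → ℝ → ℝ → ℂ} (hf : Sm f) (hg : Sm g) :
    D1 (fun t a b c => f t a b c * g t a b c)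
      = fun t a b c => D1 f t a b c * g t a b c + f t a b c * D1 g t a b c := by
  funext t a b c; exact deriv_mul (sd1 hf t a b c) (sd1 hg t a b c)
lemma D2_mul {f g : ℝ → ℝ → ℝ → ℝ → ℂ} (hf : Sm f) (hg : Sm g) :
    D2 (fun t a b c => f t a b c * g t a b c)
      = fun t a b c => D2 f t a b c * g t a b c + f t a b c * D2 g t a b c := by
  funext t a b c; exact deriv_mul (sd2 hf t a b c) (sd2 hg t a b c)
lemma D3_mul {f g : ℝ → ℝ → ℝ → ℝ → ℂ} (hf : Sm f) (hg : Sm g) :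
    D3 (fun t a b c => f t a b c * g t a b c)
      = fun t a b c => D3 f t a b c * g t a b c + f t a b c * D3 g t a b c := by
  funext t a b c; exact deriv_mul (sd3 hf t a b c) (sd3 hg t a b c)

lemma Dt_neg (f : ℝ → ℝ → ℝ → ℝ → ℂ) :
    Dt (fun t a b c => -f t a b c) = fun t a b c => -Dt f t a b c := by
  funext t a b c; exact deriv.neg
lemma D1_neg (f : ℝ → ℝ → ℝ → ℝ → ℂ) :
    D1 (fun t a b c => -f t a b c) = fun t a b c => -D1 f t a b c := by
  funext t a b c; exact deriv.neg
lemma D2_neg (f : ℝ → ℝ → ℝ → ℝ → ℂ) :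
    D2 (fun t a b c => -f t a b c) = fun t a b c => -D2 f t a b c := by
  funext t a b c; exact deriv.neg
lemma D3_neg (f : ℝ → ℝ → ℝ → ℝ → ℂ) :
    D3 (fun t a b c => -f t a b c) = fun t a b c => -D3 f t a b c := by
  funext t a b c; exact deriv.neg

lemma Dt_const (z : ℂ) : Dt (fun _ _ _ _ => z) = fun _ _ _ _ => 0 := by
  funext t a b c; exact deriv_const t z
lemma D1_const (z : ℂ) : D1 (fun _ _ _ _ => z) = fun _ _ _ _ => 0 := by
  funext t a b c; exact deriv_const a z
lemma D2_const (z : ℂ) : D2 (fun _ _ _ _ => z) = fun _ _ _ _ => 0 := by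
  funext t a b c; exact deriv_const b z
lemma D3_const (z : ℂ) : D3 (fun _ _ _ _ => z) = fun _ _ _ _ => 0 := by
  funext t a b c; exact deriv_const c z

-- atoms: sin / cos
lemma Dt_sinω (ω : ℝ) : Dt (fun t _ _ _ => ((Real.sin (ω * t) : ℝ) : ℂ))
    = fun t _ _ _ => (ω : ℂ) * ((Real.cos (ω * t) : ℝ) : ℂ) := by
  funext t a b c
  have h : HasDerivAt (fun s : ℝ => Real.sin (ω * s)) (Real.cos (ω * t) * ω) t :=
    (Real.hasDerivAt_sin (ω * t)).comp t (by simpa using (hasDerivAt_id t).const_mul ω)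
  have := h.ofReal_comp.deriv
  simp only [Dt, this]; push_cast; ring
lemma Dt_cosω (ω : ℝ) : Dt (fun t _ _ _ => ((Real.cos (ω * t) : ℝ) : ℂ))
    = fun t _ _ _ => -((ω : ℂ) * ((Real.sin (ω * t) : ℝ) : ℂ)) := by
  funext t a b c
  have h : HasDerivAt (fun s : ℝ => Real.cos (ω * s)) (-Real.sin (ω * t) * ω) t :=
    (Real.hasDerivAt_cos (ω * t)).comp t (by simpa using (hasDerivAt_id t).const_mul ω)
  have := h.ofReal_comp.deriv
  simp only [Dt, this]; push_cast; ring
lemma D1_sinω (ω : ℝ) : D1 (fun t _ _ _ => ((Real.sin (ω * t) : ℝ) : ℂ))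
    = fun _ _ _ _ => 0 := by funext t a b c; exact deriv_const a _
lemma D2_sinω (ω : ℝ) : D2 (fun t _ _ _ => ((Real.sin (ω * t) : ℝ) : ℂ))
    = fun _ _ _ _ => 0 := by funext t a b c; exact deriv_const b _
lemma D3_sinω (ω : ℝ) : D3 (fun t _ _ _ => ((Real.sin (ω * t) : ℝ) : ℂ))
    = fun _ _ _ _ => 0 := by funext t a b c; exact deriv_const c _
lemma D1_cosω (ω : ℝ) : D1 (fun t _ _ _ => ((Real.cos (ω * t) : ℝ) : ℂ))
    = fun _ _ _ _ => 0 := by funext t a b c; exact deriv_const a _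
lemma D2_cosω (ω : ℝ) : D2 (fun t _ _ _ => ((Real.cos (ω * t) : ℝ) : ℂ))
    = fun _ _ _ _ => 0 := by funext t a b c; exact deriv_const b _
lemma D3_cosω (ω : ℝ) : D3 (fun t _ _ _ => ((Real.cos (ω * t) : ℝ) : ℂ))
    = fun _ _ _ _ => 0 := by funext t a b c; exact deriv_const c _

-- atoms: coordinates
lemma deriv_ofReal' (x : ℝ) : deriv (fun s : ℝ => ((s : ℝ) : ℂ)) x = 1 := by
  simpa using (hasDerivAt_id x).ofReal_comp.deriv
lemma Dt_xa : Dt (fun _ a _ _ => ((a : ℝ) : ℂ)) = fun _ _ _ _ => 0 := by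
  funext t a b c; exact deriv_const t _
lemma D1_xa : D1 (fun _ a _ _ => ((a : ℝ) : ℂ)) = fun _ _ _ _ => 1 := by
  funext t a b c; exact deriv_ofReal' a
lemma D2_xa : D2 (fun _ a _ _ => ((a : ℝ) : ℂ)) = fun _ _ _ _ => 0 := by
  funext t a b c; exact deriv_const b _
lemma D3_xa : D3 (fun _ a _ _ => ((a : ℝ) : ℂ)) = fun _ _ _ _ => 0 := by
  funext t a b c; exact deriv_const c _
lemma Dt_xb : Dt (fun _ _ b _ => ((b : ℝ) : ℂ)) = fun _ _ _ _ => 0 := by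
  funext t a b c; exact deriv_const t _
lemma D1_xb : D1 (fun _ _ b _ => ((b : ℝ) : ℂ)) = fun _ _ _ _ => 0 := by
  funext t a b c; exact deriv_const a _
lemma D2_xb : D2 (fun _ _ b _ => ((b : ℝ) : ℂ)) = fun _ _ _ _ => 1 := by
  funext t a b c; exact deriv_ofReal' b
lemma D3_xb : D3 (fun _ _ b _ => ((b : ℝ) : ℂ)) = fun _ _ _ _ => 0 := by
  funext t a b c; exact deriv_const c _
lemma Dt_xc : Dt (fun _ _ _ c => ((c : ℝ) : ℂ)) = fun _ _ _ _ => 0 := by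
  funext t a b c; exact deriv_const t _
lemma D1_xc : D1 (fun _ _ _ c => ((c : ℝ) : ℂ)) = fun _ _ _ _ => 0 := by
  funext t a b c; exact deriv_const a _
lemma D2_xc : D2 (fun _ _ _ c => ((c : ℝ) : ℂ)) = fun _ _ _ _ => 0 := by
  funext t a b c; exact deriv_const b _
lemma D3_xc : D3 (fun _ _ _ c => ((c : ℝ) : ℂ)) = fun _ _ _ _ => 1 := by
  funext t a b c; exact deriv_ofReal' c


/-- the linear rotating harmonic-oscillator operator
L = i∂ₜ + (1/2)Δ − (ω²/2)|x|² + ωL_z with L_z = i(x₂∂₁ − x₁∂₂) -/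
noncomputable def Lop (ω : ℝ) (u : ℝ → ℝ → ℝ → ℝ → ℂ) : ℝ → ℝ → ℝ → ℝ → ℂ :=
  fun t a b c =>
    Complex.I * Dt u t a b c
      + (1 / 2 : ℂ) * (D1 (D1 u) t a b c + D2 (D2 u) t a b c + D3 (D3 u) t a b c)
      - ((ω ^ 2 / 2 : ℝ) : ℂ) * ((a ^ 2 + b ^ 2 + c ^ 2 : ℝ) : ℂ) * u t a b c
      + (ω : ℂ) * (Complex.I * ((b : ℂ) * D1 u t a b c - (a : ℂ) * D2 u t a b c))

/-- first component of J(t) -/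
noncomputable def Jop1 (ω : ℝ) (u : ℝ → ℝ → ℝ → ℝ → ℂ) : ℝ → ℝ → ℝ → ℝ → ℂ :=
  fun t a b c =>
    ((ω * Real.sin (ω * t) * (Real.cos (ω * t) * a + Real.sin (ω * t) * (-b)) : ℝ) : ℂ)
        * u t a b c
      - Complex.I * (Real.cos (ω * t) : ℂ) *
        ((Real.cos (ω * t) : ℂ) * D1 u t a b c + (Real.sin (ω * t) : ℂ) * (-(D2 u t a b c)))

/-- second component of J(t) -/
noncomputable def Jop2 (ω : ℝ) (u : ℝ → ℝ → ℝ → ℝ → ℂ) : ℝ → ℝ → ℝ → ℝ → ℂ :=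
  fun t a b c =>
    ((ω * Real.sin (ω * t) * (Real.cos (ω * t) * b + Real.sin (ω * t) * a) : ℝ) : ℂ)
        * u t a b c
      - Complex.I * (Real.cos (ω * t) : ℂ) *
        ((Real.cos (ω * t) : ℂ) * D2 u t a b c + (Real.sin (ω * t) : ℂ) * D1 u t a b c)

/-- third component of J(t), with x̆₃ = (cot(ωt) − csc(ωt))x₃ -/
noncomputable def Jop3 (ω : ℝ) (u : ℝ → ℝ → ℝ → ℝ → ℂ) : ℝ → ℝ → ℝ → ℝ → ℂ :=
  fun t a b c =>
    ((ω * Real.sin (ω * t) * (Real.cos (ω * t)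
        + Real.sin (ω * t) * (Real.cos (ω * t) / Real.sin (ω * t) - 1 / Real.sin (ω * t)))
        * c : ℝ) : ℂ) * u t a b c
      - Complex.I * (Real.cos (ω * t) : ℂ) *
        (((Real.cos (ω * t)
          + Real.sin (ω * t) * (Real.cos (ω * t) / Real.sin (ω * t) - 1 / Real.sin (ω * t))
           : ℝ) : ℂ) * D3 u t a b c)

lemma Lop_congr (ω : ℝ) (v w : ℝ → ℝ → ℝ → ℝ → ℂ) (t : ℝ)
    (h1 : v t = w t)
    (h2 : ∀ a b c : ℝ, (fun s => v s a b c) =ᶠ[nhds t] fun s => w s a b c) :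
    ∀ a b c : ℝ, Lop ω v t a b c = Lop ω w t a b c := by
  have hD1 : D1 v t = D1 w t := by funext a b c; simp only [D1, h1]
  have hD2 : D2 v t = D2 w t := by funext a b c; simp only [D2, h1]
  have hD3 : D3 v t = D3 w t := by funext a b c; simp only [D3, h1]
  intro a b c
  have hDt : Dt v t a b c = Dt w t a b c := (h2 a b c).deriv_eq
  have h11 : D1 (D1 v) t a b c = D1 (D1 w) t a b c := by
    show deriv (fun s => D1 v t s b c) a = deriv (fun s => D1 w t s b c) a
    simp only [hD1]
  have h22 : D2 (D2 v) t a b c = D2 (D2 w) t a b c := by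
    show deriv (fun s => D2 v t a s c) b = deriv (fun s => D2 w t a s c) b
    simp only [hD2]
  have h33 : D3 (D3 v) t a b c = D3 (D3 w) t a b c := by
    show deriv (fun s => D3 v t a b s) c = deriv (fun s => D3 w t a b s) c
    simp only [hD3]
  simp only [Lop, hDt, h11, h22, h33, h1, hD1, hD2, hD3]

set_option maxHeartbeats 4000000 in
theorem commutation_relation_J (ω : ℝ) (hω : 0 < ω) (u : ℝ → ℝ → ℝ → ℝ → ℂ)
    (hsmooth : ContDiff ℝ (⊤ : ℕ∞)
      (fun p : ℝ × ℝ × ℝ × ℝ => u p.1 p.2.1 p.2.2.1 p.2.2.2)) :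
    ∀ t a b c : ℝ, Real.sin (ω * t) ≠ 0 →
      Jop1 ω (Lop ω u) t a b c - Lop ω (Jop1 ω u) t a b c = 0 ∧
      Jop2 ω (Lop ω u) t a b c - Lop ω (Jop2 ω u) t a b c = 0 ∧
      Jop3 ω (Lop ω u) t a b c - Lop ω (Jop3 ω u) t a b c =
        2 * Complex.I * (ω : ℂ) * (Real.sin (ω * t) : ℂ) *
          ((ω : ℂ) * (Real.sin (ω * t) : ℂ) * (c : ℂ) * u t a b c
            - Complex.I * (Real.cos (ω * t) : ℂ) * D3 u t a b c) := by
  have hu : Sm u := hsmooth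
  intro t a b c hs
  have leq : ∀ v : ℝ → ℝ → ℝ → ℝ → ℂ, Lop ω v = fun t a b c =>
      (fun _ _ _ _ => Complex.I) t a b c * Dt v t a b c
      + (fun _ _ _ _ => (1/2 : ℂ)) t a b c *
          (D1 (D1 v) t a b c + D2 (D2 v) t a b c + D3 (D3 v) t a b c)
      - (fun _ _ _ _ => ((ω ^ 2 / 2 : ℝ) : ℂ)) t a b c *
          (((a : ℝ) : ℂ) * ((a : ℝ) : ℂ) + ((b : ℝ) : ℂ) * ((b : ℝ) : ℂ)
            + ((c : ℝ) : ℂ) * ((c : ℝ) : ℂ)) * v t a b c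
      + (fun _ _ _ _ => (ω : ℂ)) t a b c * (Complex.I *
          (((b : ℝ) : ℂ) * D1 v t a b c - ((a : ℝ) : ℂ) * D2 v t a b c)) := by
    intro v; funext t a b c; simp only [Lop]; push_cast; ring
  refine ⟨?_, ?_, ?_⟩
  · -- first component
    have jeq : ∀ v : ℝ → ℝ → ℝ → ℝ → ℂ, Jop1 ω v = fun t a b c =>
        ((ω : ℂ) * ((Real.sin (ω * t) : ℝ) : ℂ) *
          (((Real.cos (ω * t) : ℝ) : ℂ) * ((a : ℝ) : ℂ)
            - ((Real.sin (ω * t) : ℝ) : ℂ) * ((b : ℝ) : ℂ))) * v t a b c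
        + (-(Complex.I) * (((Real.cos (ω * t) : ℝ) : ℂ) * ((Real.cos (ω * t) : ℝ) : ℂ)))
            * D1 v t a b c
        + (Complex.I * (((Real.cos (ω * t) : ℝ) : ℂ) * ((Real.sin (ω * t) : ℝ) : ℂ)))
            * D2 v t a b c := by
      intro v; funext t a b c; simp only [Jop1]; push_cast; ring
    simp only [leq, jeq]
    simp (config := { maxDischargeDepth := 100 }) only [Dt_add, D1_add, D2_add, D3_add,
      Dt_sub, D1_sub, D2_sub, D3_sub,
      Dt_mul, D1_mul, D2_mul, D3_mul, Dt_neg, D1_neg, D2_neg, D3_neg,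
      Dt_const, D1_const, D2_const, D3_const,
      Dt_sinω, Dt_cosω, D1_sinω, D2_sinω, D3_sinω, D1_cosω, D2_cosω, D3_cosω,
      Dt_xa, D1_xa, D2_xa, D3_xa, Dt_xb, D1_xb, D2_xb, D3_xb, Dt_xc, D1_xc, D2_xc, D3_xc,
      swap_t1, swap_t2, swap_t3, swap_21, swap_31, swap_32,
      hu, Sm.add, Sm.sub, Sm.mul, Sm.neg, Sm.const, Sm.sinω, Sm.cosω,
      Sm.xa, Sm.xb, Sm.xc, Sm.dt, Sm.d1, Sm.d2, Sm.d3]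
    push_cast
    ring_nf
    simp only [Complex.I_sq]
    ring
  · -- second component
    have jeq : ∀ v : ℝ → ℝ → ℝ → ℝ → ℂ, Jop2 ω v = fun t a b c =>
        ((ω : ℂ) * ((Real.sin (ω * t) : ℝ) : ℂ) *
          (((Real.cos (ω * t) : ℝ) : ℂ) * ((b : ℝ) : ℂ)
            + ((Real.sin (ω * t) : ℝ) : ℂ) * ((a : ℝ) : ℂ))) * v t a b c
        + (-(Complex.I) * (((Real.cos (ω * t) : ℝ) : ℂ) * ((Real.sin (ω * t) : ℝ) : ℂ)))
            * D1 v t a b c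
        + (-(Complex.I) * (((Real.cos (ω * t) : ℝ) : ℂ) * ((Real.cos (ω * t) : ℝ) : ℂ)))
            * D2 v t a b c := by
      intro v; funext t a b c; simp only [Jop2]; push_cast; ring
    simp only [leq, jeq]
    simp (config := { maxDischargeDepth := 100 }) only [Dt_add, D1_add, D2_add, D3_add,
      Dt_sub, D1_sub, D2_sub, D3_sub,
      Dt_mul, D1_mul, D2_mul, D3_mul, Dt_neg, D1_neg, D2_neg, D3_neg,
      Dt_const, D1_const, D2_const, D3_const,
      Dt_sinω, Dt_cosω, D1_sinω, D2_sinω, D3_sinω, D1_cosω, D2_cosω, D3_cosω,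
      Dt_xa, D1_xa, D2_xa, D3_xa, Dt_xb, D1_xb, D2_xb, D3_xb, Dt_xc, D1_xc, D2_xc, D3_xc,
      swap_t1, swap_t2, swap_t3, swap_21, swap_31, swap_32,
      hu, Sm.add, Sm.sub, Sm.mul, Sm.neg, Sm.const, Sm.sinω, Sm.cosω,
      Sm.xa, Sm.xb, Sm.xc, Sm.dt, Sm.d1, Sm.d2, Sm.d3]
    push_cast
    ring_nf
    simp only [Complex.I_sq]
    ring
  · -- third component
    have jeq3 : ∀ (v : ℝ → ℝ → ℝ → ℝ → ℂ) (s a' b' c' : ℝ), Real.sin (ω * s) ≠ 0 →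
        Jop3 ω v s a' b' c' =
        ((ω : ℂ) * ((Real.sin (ω * s) : ℝ) : ℂ) *
            (2 * ((Real.cos (ω * s) : ℝ) : ℂ) - 1) * ((c' : ℝ) : ℂ)) * v s a' b' c'
        + (-(Complex.I) * (((Real.cos (ω * s) : ℝ) : ℂ) *
            (2 * ((Real.cos (ω * s) : ℝ) : ℂ) - 1))) * D3 v s a' b' c' := by
      intro v s a' b' c' hs'
      have hco : Real.cos (ω * s) + Real.sin (ω * s) *
          (Real.cos (ω * s) / Real.sin (ω * s) - 1 / Real.sin (ω * s))
          = 2 * Real.cos (ω * s) - 1 := by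
        field_simp
        ring
      simp only [Jop3, hco]; push_cast; ring
    set w : ℝ → ℝ → ℝ → ℝ → ℂ := fun s a' b' c' =>
        ((ω : ℂ) * ((Real.sin (ω * s) : ℝ) : ℂ) *
            (2 * ((Real.cos (ω * s) : ℝ) : ℂ) - 1) * ((c' : ℝ) : ℂ)) * u s a' b' c'
        + (-(Complex.I) * (((Real.cos (ω * s) : ℝ) : ℂ) *
            (2 * ((Real.cos (ω * s) : ℝ) : ℂ) - 1))) * D3 u s a' b' c' with hw
    have hev : ∀ᶠ s in nhds t, Real.sin (ω * s) ≠ 0 := by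
      have hc : ContinuousAt (fun s : ℝ => Real.sin (ω * s)) t :=
        (Real.continuous_sin.comp (continuous_const.mul continuous_id)).continuousAt
      exact hc.eventually_ne hs
    have hLcong : ∀ a' b' c' : ℝ, Lop ω (Jop3 ω u) t a' b' c' = Lop ω w t a' b' c' := by
      refine Lop_congr ω (Jop3 ω u) w t ?_ ?_
      · funext a' b' c'; exact jeq3 u t a' b' c' hs
      · intro a' b' c'
        exact hev.mono fun s hs' => jeq3 u s a' b' c' hs'
    rw [jeq3 (Lop ω u) t a b c hs, hLcong a b c, hw]
    simp only [leq]
    simp (config := { maxDischargeDepth := 100 }) only [Dt_add, D1_add, D2_add, D3_add,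
      Dt_sub, D1_sub, D2_sub, D3_sub,
      Dt_mul, D1_mul, D2_mul, D3_mul, Dt_neg, D1_neg, D2_neg, D3_neg,
      Dt_const, D1_const, D2_const, D3_const,
      Dt_sinω, Dt_cosω, D1_sinω, D2_sinω, D3_sinω, D1_cosω, D2_cosω, D3_cosω,
      Dt_xa, D1_xa, D2_xa, D3_xa, Dt_xb, D1_xb, D2_xb, D3_xb, Dt_xc, D1_xc, D2_xc, D3_xc,
      swap_t1, swap_t2, swap_t3, swap_21, swap_31, swap_32,
      hu, Sm.add, Sm.sub, Sm.mul, Sm.neg, Sm.const, Sm.sinω, Sm.cosω,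
      Sm.xa, Sm.xb, Sm.xc, Sm.dt, Sm.d1, Sm.d2, Sm.d3]
    push_cast
    ring_nf
    simp only [Complex.I_sq]
    ring
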